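/- If q is even, then the metric dimension of the generalized quadrangle W(q) is at most 8q. -/

import Mathlib

open Set

/-- The bipartite point-line incidence graph of an incidence relation `I`. -/
def IncGraph {Pt Ln : Type*} (I : Pt → Ln → Prop) : SimpleGraph (Pt ⊕ Ln) where
  Adj x y := (∃ p l, x = Sum.inl p ∧ y = Sum.inr l ∧ I p l) ∨
             (∃ p l, x = Sum.inr l ∧ y = Sum.inl p ∧ I p l)
  symm := by
    constructor
    rintro x y (⟨p, l, hx, hy, h⟩ | ⟨p, l, hx, hy, h⟩)
    · exact Or.inr ⟨p, l, hy, hx, h⟩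
    · exact Or.inl ⟨p, l, hy, hx, h⟩
  loopless := by
    constructor
    rintro x (⟨p, l, hx, hy, h⟩ | ⟨p, l, hx, hy, h⟩) <;> subst hx <;> simp_all

/-- A set of vertices is a resolving set if every vertex is determined
by its distances to the elements of `S`. -/
def IsResolvingSet {V : Type*} (G : SimpleGraph V) (S : Set V) : Prop :=
  ∀ x y : V, (∀ s ∈ S, G.dist x s = G.dist y s) → x = y

noncomputable section

/-- The standard symplectic (alternating, nondegenerate) form on `F_q⁴`, defining the
null polarity whose self-conjugate lines are the lines of `W(q)`. -/
def symp {p n : ℕ} [Fact p.Prime] (x y : Fin 4 → GaloisField p n) : GaloisField p n :=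
  x 0 * y 1 - x 1 * y 0 + x 2 * y 3 - x 3 * y 2

/-- Points of `W(q)`: all points of `PG(3,q)`, `q = p^n`. -/
abbrev WPoint (p n : ℕ) [Fact p.Prime] :=
  Projectivization (GaloisField p n) (Fin 4 → GaloisField p n)

/-- Lines of `W(q)`: the totally isotropic (self-conjugate) projective lines, i.e. the
`2`-dimensional subspaces on which the symplectic form vanishes. -/
def WLine (p n : ℕ) [Fact p.Prime] :=
  {W : Submodule (GaloisField p n) (Fin 4 → GaloisField p n) //
    Module.finrank (GaloisField p n) W = 2 ∧ ∀ x ∈ W, ∀ y ∈ W, symp x y = 0}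

/-- Incidence in `W(q)`. -/
def wIncid {p n : ℕ} [Fact p.Prime] (P : WPoint p n) (l : WLine p n) : Prop :=
  P.rep ∈ l.1

/-!
Take the quadrilateral of `W(q)` with vertices `e₀, e₂, e₁, e₃`; the resolving set consists of the
`4q` points on its sides and the `4q` lines through its vertices. Points and lines are told apart
by the parity of distances, the incidence graph being bipartite and connected.

A point `z` is at distance `≤ 2` from a point `x` if `z ⊥ x` and `≥ 3` otherwise. On a side, the
points orthogonal to `x` form the kernel of a functional, so the side separates `x` from `y` unless
a `2 × 2` minor of their coordinates vanishes. If all four minors vanish, `x` and `y` lie on one of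
the hyperbolic lines `⟨e₀, e₁⟩`, `⟨e₂, e₃⟩`, and the line joining `x` to a vertex misses `y`.

Two lines meeting in `P` are separated by the line joining a vertex `e` not orthogonal to `P` to the
point of the first line orthogonal to `e`: it meets the first line and misses the second. For skew
lines `y₁`, `y₂` write each vertex as `pᵢ + qᵢ` with `pᵢ ∈ y₁`, `qᵢ ∈ y₂`. If some `⟨pᵢ, qᵢ⟩` is
not totally isotropic, a vertex line separates as before. Otherwise, since for `q` even `symp` is
the polar form of `Q = x₀x₁ + x₂x₃` and `Q(pᵢ) = Q(qᵢ)`, the line `y₁` lies on the quadric `Q = 0`,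
hence meets a side in a point that is not on `y₂`.
-/

namespace SimpleGraph

variable {V : Type*} {G : SimpleGraph V} {u v w : V}

def Resolves (G : SimpleGraph V) (S : Set V) (u v : V) : Prop :=
  ∃ s ∈ S, G.dist u s ≠ G.dist v s

lemma Resolves.symm {S : Set V} (h : G.Resolves S u v) : G.Resolves S v u :=
  let ⟨s, hs, hne⟩ := h
  ⟨s, hs, hne.symm⟩

lemma isResolvingSet_of_resolves {S : Set V} (h : ∀ u v, u ≠ v → G.Resolves S u v) :
    IsResolvingSet G S := fun u v hdist ↦ by
  by_contra huv
  obtain ⟨s, hs, hne⟩ := h u v huv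
  exact hne (hdist s hs)

lemma dist_le_two_of_adj_of_adj (huw : G.Adj u w) (hwv : G.Adj w v) : G.dist u v ≤ 2 :=
  dist_le (.cons huw (.cons hwv .nil))

lemma Reachable.three_le_dist (hr : G.Reachable u v) (hne : u ≠ v) (hadj : ¬G.Adj u v)
    (hcommon : ∀ w, G.Adj u w → ¬G.Adj w v) : 3 ≤ G.dist u v := by
  have h : 2 < G.edist u v := two_lt_edist_iff.2 ⟨hne, hadj,
    Set.eq_empty_iff_forall_notMem.2 fun w hw ↦ hcommon w hw.1 hw.2.symm⟩
  rw [← hr.coe_dist_eq_edist] at h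
  exact_mod_cast h

end SimpleGraph

namespace IncGraph

open SimpleGraph

variable {Pt Ln : Type*} {I : Pt → Ln → Prop} {p p' : Pt} {l l' : Ln}

@[simp]
lemma adj_inl_inr : (IncGraph I).Adj (.inl p) (.inr l) ↔ I p l := by
  simp [IncGraph]

@[simp]
lemma adj_inr_inl : (IncGraph I).Adj (.inr l) (.inl p) ↔ I p l := by
  simp [IncGraph]

@[simp]
lemma not_adj_inl_inl : ¬(IncGraph I).Adj (.inl p) (.inl p') := by
  simp [IncGraph]

@[simp]
lemma not_adj_inr_inr : ¬(IncGraph I).Adj (.inr l) (.inr l') := by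
  simp [IncGraph]

def sideColoring : (IncGraph I).Coloring Bool :=
  Coloring.mk Sum.isLeft <| by
    rintro (_ | _) (_ | _) h <;> simp_all

@[simp]
lemma sideColoring_apply (v : Pt ⊕ Ln) : (sideColoring (I := I)) v = v.isLeft := rfl

lemma dist_inl_ne_dist_inr (hG : (IncGraph I).Preconnected) (p : Pt) (l : Ln)
    (s : Pt ⊕ Ln) : (IncGraph I).dist (.inl p) s ≠ (IncGraph I).dist (.inr l) s := by
  obtain ⟨w, hw⟩ := (hG (.inl p) s).exists_walk_length_eq_dist
  obtain ⟨w', hw'⟩ := (hG (.inr l) s).exists_walk_length_eq_dist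
  have h := sideColoring.even_length_iff_congr w
  intro heq
  rw [hw, heq, ← hw', sideColoring.even_length_iff_congr w'] at h
  cases s <;> simp at h

lemma preconnected_of_reachable [Nonempty Pt] [Nonempty Ln]
    (h : ∀ p l, (IncGraph I).Reachable (.inl p) (.inr l)) : (IncGraph I).Preconnected := by
  obtain ⟨p₀⟩ := ‹Nonempty Pt›
  obtain ⟨l₀⟩ := ‹Nonempty Ln›
  rintro (p | l) (p' | l')
  · exact (h p l₀).trans (h p' l₀).symm
  · exact h p l'
  · exact (h p' l).symm
  · exact (h p₀ l).symm.trans (h p₀ l')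

lemma dist_inl_inr_eq_one_iff : (IncGraph I).dist (.inl p) (.inr l) = 1 ↔ I p l := by
  simp

lemma dist_inl_inl_le_two (h : I p l) (h' : I p' l) : (IncGraph I).dist (.inl p) (.inl p') ≤ 2 :=
  dist_le_two_of_adj_of_adj (w := .inr l) (by simpa) (by simpa)

lemma dist_inr_inr_le_two (h : I p l) (h' : I p l') : (IncGraph I).dist (.inr l) (.inr l') ≤ 2 :=
  dist_le_two_of_adj_of_adj (w := .inl p) (by simpa) (by simpa)

lemma three_le_dist_inl_inl (hG : (IncGraph I).Preconnected) (hne : p ≠ p')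
    (h : ∀ l, I p l → ¬I p' l) : 3 ≤ (IncGraph I).dist (.inl p) (.inl p') :=
  (hG _ _).three_le_dist (by simpa) not_adj_inl_inl <| by
    rintro (_ | l) <;> simp_all

lemma three_le_dist_inr_inr (hG : (IncGraph I).Preconnected) (hne : l ≠ l')
    (h : ∀ p, I p l → ¬I p l') : 3 ≤ (IncGraph I).dist (.inr l) (.inr l') :=
  (hG _ _).three_le_dist (by simpa) not_adj_inr_inr <| by
    rintro (p | _) <;> simp_all

end IncGraph

section LinearAlgebra

variable {K V : Type*} [Field K] [AddCommGroup V] [Module K V]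

lemma Submodule.exists_mem_ne_zero_map_eq_zero (W : Submodule K V) [FiniteDimensional K W]
    (hW : 1 < Module.finrank K W) (f : V →ₗ[K] K) : ∃ w ∈ W, w ≠ 0 ∧ f w = 0 := by
  have hker : LinearMap.ker (f ∘ₗ W.subtype) ≠ ⊥ :=
    LinearMap.ker_ne_bot_of_finrank_lt (by rwa [Module.finrank_self])
  obtain ⟨w, hw, hw0⟩ := Submodule.exists_mem_ne_zero_of_ne_bot hker
  exact ⟨w, w.2, by simpa using hw0, hw⟩

lemma finrank_span_pair {a b : V} (hab : LinearIndependent K ![a, b]) :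
    Module.finrank K (Submodule.span K {a, b}) = 2 := by
  rw [← Matrix.range_cons_cons_empty a b ![], finrank_span_eq_card hab, Fintype.card_fin]

lemma span_pair_smul_right (a b : V) {c : K} (hc : c ≠ 0) :
    Submodule.span K {a, c • b} = Submodule.span K {a, b} := by
  simp only [Submodule.span_insert, Submodule.span_singleton_smul_eq hc.isUnit]

lemma exists_smul_eq_of_mem_span_pair {a b v : V} (hv : v ∈ Submodule.span K {a, b}) :
    ∃ c t : K, v = c • (a + t • b) ∨ v = c • b := by
  obtain ⟨α, β, rfl⟩ := Submodule.mem_span_pair.1 hv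
  by_cases hα : α = 0
  · exact ⟨β, 0, .inr (by simp [hα])⟩
  · exact ⟨α, β / α, .inl (by rw [smul_add, smul_smul, mul_div_cancel₀ _ hα])⟩

lemma not_linearIndependent_of_mul_eq_mul {ι : Type*} {a b : ι → K}
    (h : ∀ i j, a i * b j = a j * b i) : ¬LinearIndependent K ![a, b] := by
  intro hab
  have ha : a ≠ 0 := hab.ne_zero 0
  obtain ⟨k, hk : a k ≠ 0⟩ := Function.ne_iff.1 ha
  refine (LinearIndependent.pair_iff' ha).1 hab (b k / a k) (funext fun i ↦ ?_)
  simp only [Pi.smul_apply, smul_eq_mul]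
  field_simp
  linear_combination -h k i

lemma coords_eq_zero_of_cyclic_minors {a b : Fin 4 → K}
    (hab : LinearIndependent K ![a, b]) (h13 : a 1 * b 3 = a 3 * b 1)
    (h03 : a 0 * b 3 = a 3 * b 0) (h02 : a 0 * b 2 = a 2 * b 0) (h12 : a 1 * b 2 = a 2 * b 1) :
    (a 2 = 0 ∧ a 3 = 0 ∧ b 2 = 0 ∧ b 3 = 0) ∨ (a 0 = 0 ∧ a 1 = 0 ∧ b 0 = 0 ∧ b 1 = 0) := by
  by_cases h01 : a 0 * b 1 = a 1 * b 0
  · by_cases h23 : a 2 * b 3 = a 3 * b 2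
    · refine absurd hab (not_linearIndependent_of_mul_eq_mul fun i j ↦ ?_)
      fin_cases i <;> fin_cases j <;> dsimp <;> grind
    · have hm : a 2 * b 3 - a 3 * b 2 ≠ 0 := sub_ne_zero.2 h23
      refine .inr ⟨?_, ?_, ?_, ?_⟩ <;> refine mul_right_cancel₀ hm ?_
      · linear_combination a 2 * h03 - a 3 * h02
      · linear_combination a 2 * h13 - a 3 * h12
      · linear_combination b 2 * h03 - b 3 * h02
      · linear_combination b 2 * h13 - b 3 * h12
  · have hm : a 0 * b 1 - a 1 * b 0 ≠ 0 := sub_ne_zero.2 h01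
    refine .inl ⟨?_, ?_, ?_, ?_⟩ <;> refine mul_right_cancel₀ hm ?_
    · linear_combination -a 0 * h12 + a 1 * h02
    · linear_combination -a 0 * h13 + a 1 * h03
    · linear_combination -b 0 * h12 + b 1 * h02
    · linear_combination -b 0 * h13 + b 1 * h03

end LinearAlgebra

lemma Set.ncard_le_card_of_subset_range {α β : Type*} [Finite α] {s : Set β} {f : α → β}
    (h : s ⊆ Set.range f) : s.ncard ≤ Nat.card α := by
  refine (Set.ncard_le_ncard h (Set.finite_range f)).trans ?_
  rw [← Set.image_univ]
  exact (Set.ncard_image_le Set.finite_univ).trans (Set.ncard_univ α).le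

namespace WQ

open Module Projectivization

variable {p n : ℕ} [Fact p.Prime]

local notation "𝕜" => GaloisField p n
local notation "𝕍" => Fin 4 → GaloisField p n

@[simp] lemma symp_add_left (x y z : 𝕍) : symp (x + y) z = symp x z + symp y z := by
  simp only [symp, Pi.add_apply]; ring

@[simp] lemma symp_add_right (x y z : 𝕍) : symp x (y + z) = symp x y + symp x z := by
  simp only [symp, Pi.add_apply]; ring

@[simp] lemma symp_sub_left (x y z : 𝕍) : symp (x - y) z = symp x z - symp y z := by
  simp only [symp, Pi.sub_apply]; ring

@[simp] lemma symp_sub_right (x y z : 𝕍) : symp x (y - z) = symp x y - symp x z := by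
  simp only [symp, Pi.sub_apply]; ring

@[simp] lemma symp_smul_left (c : 𝕜) (x y : 𝕍) : symp (c • x) y = c * symp x y := by
  simp only [symp, Pi.smul_apply, smul_eq_mul]; ring

@[simp] lemma symp_smul_right (c : 𝕜) (x y : 𝕍) : symp x (c • y) = c * symp x y := by
  simp only [symp, Pi.smul_apply, smul_eq_mul]; ring

@[simp] lemma symp_zero_right (x : 𝕍) : symp x 0 = 0 := by simp [symp]

@[simp] lemma symp_self (x : 𝕍) : symp x x = 0 := by simp only [symp]; ring

lemma symp_swap (x y : 𝕍) : symp y x = -symp x y := by simp only [symp]; ring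

lemma symp_eq_zero_comm {x y : 𝕍} : symp x y = 0 ↔ symp y x = 0 := by
  rw [symp_swap x y, neg_eq_zero]

def sympForm : LinearMap.BilinForm 𝕜 𝕍 :=
  LinearMap.mk₂ 𝕜 symp symp_add_left symp_smul_left symp_add_right symp_smul_right

lemma sympForm_apply (x y : 𝕍) : sympForm x y = symp x y := rfl

lemma isotropic_span_pair {a b : 𝕍} (h : symp a b = 0) :
    ∀ x ∈ Submodule.span 𝕜 {a, b}, ∀ y ∈ Submodule.span 𝕜 {a, b}, symp x y = 0 := by
  intro x hx y hy
  obtain ⟨α, β, rfl⟩ := Submodule.mem_span_pair.1 hx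
  obtain ⟨γ, δ, rfl⟩ := Submodule.mem_span_pair.1 hy
  simp [h, symp_eq_zero_comm.1 h]

def lineOf (a b : 𝕍) (hab : LinearIndependent 𝕜 ![a, b]) (h : symp a b = 0) : WLine p n :=
  ⟨Submodule.span 𝕜 {a, b}, finrank_span_pair hab, isotropic_span_pair h⟩

lemma left_mem_lineOf {a b : 𝕍} (hab : LinearIndependent 𝕜 ![a, b]) (h : symp a b = 0) :
    a ∈ (lineOf a b hab h).1 :=
  Submodule.subset_span (by simp)

lemma right_mem_lineOf {a b : 𝕍} (hab : LinearIndependent 𝕜 ![a, b]) (h : symp a b = 0) :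
    b ∈ (lineOf a b hab h).1 :=
  Submodule.subset_span (by simp)

lemma _root_.WLine.eq_span_pair (l : WLine p n) {a b : 𝕍} (ha : a ∈ l.1) (hb : b ∈ l.1)
    (hab : LinearIndependent 𝕜 ![a, b]) : l.1 = Submodule.span 𝕜 {a, b} := by
  refine (Submodule.eq_of_le_of_finrank_eq ?_ ?_).symm
  · exact Submodule.span_le.2 (by simp [Set.insert_subset_iff, ha, hb])
  · rw [finrank_span_pair hab, l.2.1]

lemma _root_.WLine.exists_mem_ne_zero_symp_eq_zero (l : WLine p n) (v : 𝕍) :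
    ∃ z ∈ l.1, z ≠ 0 ∧ symp z v = 0 :=
  l.1.exists_mem_ne_zero_map_eq_zero (by rw [l.2.1]; norm_num) (sympForm.flip v)

lemma rep_mk_mem_iff {v : 𝕍} (hv : v ≠ 0) {W : Submodule 𝕜 𝕍} :
    (mk 𝕜 v hv).rep ∈ W ↔ v ∈ W := by
  obtain ⟨a, ha⟩ := exists_smul_eq_mk_rep 𝕜 v hv
  rw [← ha, Submodule.smul_mem_iff' W a]

lemma symp_rep_mk_eq_zero_iff (w : 𝕍) {v : 𝕍} (hv : v ≠ 0) :
    symp w (mk 𝕜 v hv).rep = 0 ↔ symp w v = 0 := by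
  obtain ⟨a, ha⟩ := exists_smul_eq_mk_rep 𝕜 v hv
  rw [← ha, Units.smul_def, symp_smul_right, mul_eq_zero, or_iff_right a.ne_zero]

lemma eq_mk_of_rep_eq_smul {x : WPoint p n} {v : 𝕍} (hv : v ≠ 0) {c : 𝕜}
    (h : x.rep = c • v) : x = mk 𝕜 v hv := by
  rw [← mk_rep x, mk_eq_mk_iff']
  exact ⟨c, h.symm⟩

lemma exists_line_through_of_symp_eq_zero {x z : WPoint p n} (hxz : x ≠ z)
    (h : symp x.rep z.rep = 0) : ∃ l : WLine p n, wIncid x l ∧ wIncid z l :=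
  have hind := linearIndependent_pair_iff_ne.2 hxz
  ⟨lineOf _ _ hind h, left_mem_lineOf hind h, right_mem_lineOf hind h⟩

local notation "𝒢" => IncGraph (wIncid (p := p) (n := n))

lemma reachable_inl_inr (x : WPoint p n) (l : WLine p n) : (𝒢).Reachable (.inl x) (.inr l) := by
  obtain ⟨z, hzl, hz0, hzx⟩ := l.exists_mem_ne_zero_symp_eq_zero x.rep
  have hz : (𝒢).Reachable (.inl (mk 𝕜 z hz0)) (.inr l) :=
    ((IncGraph.adj_inl_inr (I := wIncid)).2 ((rep_mk_mem_iff hz0).2 hzl)).reachable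
  by_cases hxz : x = mk 𝕜 z hz0
  · rwa [hxz]
  obtain ⟨m, hxm, hzm⟩ := exists_line_through_of_symp_eq_zero hxz
    ((symp_rep_mk_eq_zero_iff _ hz0).2 (symp_eq_zero_comm.1 hzx))
  exact ((IncGraph.adj_inl_inr (I := wIncid)).2 hxm).reachable.trans
    (((IncGraph.adj_inl_inr (I := wIncid)).2 hzm).reachable.symm.trans hz)

def cornerIdx : Fin 4 → Fin 4 := ![0, 2, 1, 3]

/-- The vertices `e₀, e₂, e₁, e₃` of the quadrilateral, in cyclic order. -/
def corner (i : Fin 4) : 𝕍 := Pi.single (cornerIdx i) 1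

lemma corner_ne_zero (i : Fin 4) : (corner i : 𝕍) ≠ 0 := by
  simp [corner]

lemma symp_corner_succ (i : Fin 4) : symp (corner i) (corner (i + 1) : 𝕍) = 0 := by
  fin_cases i <;> simp [symp, corner, cornerIdx]

lemma exists_symp_corner_ne_zero {v : 𝕍} (hv : v ≠ 0) : ∃ i, symp v (corner i) ≠ 0 := by
  by_contra! h
  have h0 := h 0
  have h1 := h 1
  have h2 := h 2
  have h3 := h 3
  simp [symp, corner, cornerIdx] at h0 h1 h2 h3
  exact hv (funext fun k ↦ by fin_cases k <;> assumption)

instance : Nonempty (WPoint p n) := ⟨mk 𝕜 (corner 0) (corner_ne_zero 0)⟩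

lemma linearIndependent_corner {i : Fin 4} {w : 𝕍} (hw : w ≠ 0) (hwi : w (cornerIdx i) = 0) :
    LinearIndependent 𝕜 ![corner i, w] := by
  refine (LinearIndependent.pair_iff' (corner_ne_zero i)).2 fun a ha ↦ hw ?_
  have h := congrFun ha (cornerIdx i)
  simp [corner, hwi] at h
  simp [← ha, h]

instance : Nonempty (WLine p n) :=
  ⟨lineOf (corner 0) (corner 1)
    (linearIndependent_corner (corner_ne_zero 1) (by simp [corner, cornerIdx]))
    (symp_corner_succ 0)⟩

lemma preconnected : (𝒢).Preconnected :=
  IncGraph.preconnected_of_reachable reachable_inl_inr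

lemma dist_inl_inl_le_two {x z : WPoint p n} (h : symp x.rep z.rep = 0) :
    (𝒢).dist (.inl x) (.inl z) ≤ 2 := by
  by_cases hxz : x = z
  · simp [hxz]
  obtain ⟨l, hx, hz⟩ := exists_line_through_of_symp_eq_zero hxz h
  exact IncGraph.dist_inl_inl_le_two hx hz

lemma three_le_dist_inl_inl {x z : WPoint p n} (h : symp x.rep z.rep ≠ 0) :
    3 ≤ (𝒢).dist (.inl x) (.inl z) :=
  IncGraph.three_le_dist_inl_inl preconnected (by rintro rfl; simp at h)
    fun l hx hz ↦ h (l.2.2 _ hx _ hz)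

lemma three_le_dist_inr_inr {l m : WLine p n} (h : l.1 ⊓ m.1 = ⊥) :
    3 ≤ (𝒢).dist (.inr l) (.inr m) := by
  refine IncGraph.three_le_dist_inr_inr preconnected ?_ fun x hl hm ↦ x.rep_nonzero ?_
  · rintro rfl
    have h2 := l.2.1
    rw [inf_idem] at h
    rw [h, finrank_bot] at h2
    exact absurd h2 (by norm_num)
  · simpa [h] using Submodule.mem_inf.2 ⟨hl, hm⟩

def side (i : Fin 4) : Submodule 𝕜 𝕍 := Submodule.span 𝕜 {corner i, corner (i + 1)}

def sidePoints : Set (WPoint p n) := {x | ∃ i, x.rep ∈ side i}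

def cornerLines : Set (WLine p n) := {l | ∃ i, corner i ∈ l.1}

def resolvingSet : Set (WPoint p n ⊕ WLine p n) := .inl '' sidePoints ∪ .inr '' cornerLines

lemma mk_mem_sidePoints {i : Fin 4} {v : 𝕍} (hv : v ≠ 0) (h : v ∈ side i) :
    mk 𝕜 v hv ∈ sidePoints :=
  ⟨i, (rep_mk_mem_iff hv).2 h⟩

lemma corner_add_smul_ne_zero (i : Fin 4) (t : 𝕜) :
    corner i + t • corner (i + 1) ≠ (0 : 𝕍) := by
  intro h
  have h' := congrFun h (cornerIdx i)
  fin_cases i <;> simp [corner, cornerIdx] at h'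

lemma apply_cornerIdx_eq_zero {w : 𝕍} (i : Fin 4) (h : symp w (corner (i + 2)) = 0) :
    w (cornerIdx i) = 0 := by
  fin_cases i <;> simpa [symp, corner, cornerIdx] using h

lemma mem_span_corner_of_symp_eq_zero {w : 𝕍} (i : Fin 4) (h : symp w (corner i) = 0)
    (h' : symp w (corner (i + 2)) = 0) :
    w ∈ Submodule.span 𝕜 {corner (i + 3), corner (i + 1)} := by
  refine Submodule.mem_span_pair.2 ⟨w (cornerIdx (i + 3)), w (cornerIdx (i + 1)), ?_⟩
  ext k
  fin_cases i <;> fin_cases k <;> simp_all [symp, corner, cornerIdx]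

lemma ncard_sidePoints_le (hn : n ≠ 0) : (sidePoints (p := p) (n := n)).ncard ≤ 4 * p ^ n := by
  have hsub : sidePoints ⊆
      Set.range fun it : Fin 4 × 𝕜 ↦ mk 𝕜 _ (corner_add_smul_ne_zero it.1 it.2) := by
    rintro x ⟨i, hi⟩
    obtain ⟨c, t, h | h⟩ := exists_smul_eq_of_mem_span_pair hi
    · exact ⟨(i, t), (eq_mk_of_rep_eq_smul _ h).symm⟩
    · exact ⟨(i + 1, 0), (eq_mk_of_rep_eq_smul _ (by simpa using h)).symm⟩
  have h := Set.ncard_le_card_of_subset_range hsub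
  rwa [Nat.card_prod, Nat.card_eq_fintype_card, Fintype.card_fin, GaloisField.card p n hn] at h

lemma ncard_cornerLines_le (hn : n ≠ 0) : (cornerLines (p := p) (n := n)).ncard ≤ 4 * p ^ n := by
  have hsub : Subtype.val '' cornerLines ⊆ Set.range fun is : Fin 4 × 𝕜 ↦
      Submodule.span 𝕜 {corner is.1, corner (is.1 + 3) + is.2 • corner (is.1 + 1)} := by
    rintro _ ⟨l, ⟨i, hi⟩, rfl⟩
    obtain ⟨w, hw, hw0, hwc⟩ := WLine.exists_mem_ne_zero_symp_eq_zero l (corner (i + 2))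
    have hl := WLine.eq_span_pair l hi hw
      (linearIndependent_corner hw0 (apply_cornerIdx_eq_zero i hwc))
    obtain ⟨c, s, h | h⟩ := exists_smul_eq_of_mem_span_pair
      (mem_span_corner_of_symp_eq_zero i (symp_eq_zero_comm.1 (l.2.2 _ hi _ hw)) hwc)
    all_goals have hc : c ≠ 0 := by rintro rfl; simp [h] at hw0
    · exact ⟨(i, s), by rw [hl, h, span_pair_smul_right _ _ hc]⟩
    · refine ⟨(i + 1, 0), ?_⟩
      rw [hl, h, span_pair_smul_right _ _ hc, Set.pair_comm]
      simp [add_assoc, show (1 + 3 : Fin 4) = 0 from rfl]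
  have h := (Set.ncard_image_of_injective _ Subtype.val_injective).symm.trans_le
    (Set.ncard_le_card_of_subset_range hsub)
  rwa [Nat.card_prod, Nat.card_eq_fintype_card, Fintype.card_fin, GaloisField.card p n hn] at h

lemma ncard_resolvingSet_le (hn : n ≠ 0) :
    (resolvingSet (p := p) (n := n)).ncard ≤ 8 * p ^ n := by
  calc (resolvingSet (p := p) (n := n)).ncard
      ≤ (Sum.inl '' sidePoints (p := p) (n := n)).ncard
        + (Sum.inr '' cornerLines (p := p) (n := n)).ncard := Set.ncard_union_le _ _
    _ = sidePoints.ncard + cornerLines.ncard := by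
      rw [Set.ncard_image_of_injective _ Sum.inl_injective,
        Set.ncard_image_of_injective _ Sum.inr_injective]
    _ ≤ 8 * p ^ n := by
      have := ncard_sidePoints_le (p := p) hn
      have := ncard_cornerLines_le (p := p) hn
      omega

lemma resolves_inl_inl_of_sidePoint {x y z : WPoint p n} (hz : z ∈ sidePoints)
    (hx : symp x.rep z.rep = 0) (hy : symp y.rep z.rep ≠ 0) :
    (𝒢).Resolves resolvingSet (.inl x) (.inl y) := by
  refine ⟨.inl z, .inl ⟨z, hz, rfl⟩, ?_⟩
  have := dist_inl_inl_le_two hx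
  have := three_le_dist_inl_inl hy
  omega

lemma resolves_inl_inl_of_cornerLine {x y : WPoint p n} {l : WLine p n} (hl : l ∈ cornerLines)
    (hx : wIncid x l) (hy : ¬wIncid y l) : (𝒢).Resolves resolvingSet (.inl x) (.inl y) := by
  refine ⟨.inr l, .inr ⟨l, hl, rfl⟩, ?_⟩
  rw [IncGraph.dist_inl_inr_eq_one_iff.2 hx]
  exact fun h ↦ hy (IncGraph.dist_inl_inr_eq_one_iff.1 h.symm)

lemma resolves_inr_inr_of_sidePoint {l m : WLine p n} {z : WPoint p n} (hz : z ∈ sidePoints)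
    (hl : wIncid z l) (hm : ¬wIncid z m) : (𝒢).Resolves resolvingSet (.inr l) (.inr m) := by
  refine ⟨.inl z, .inl ⟨z, hz, rfl⟩, ?_⟩
  rw [SimpleGraph.dist_comm, IncGraph.dist_inl_inr_eq_one_iff.2 hl, SimpleGraph.dist_comm]
  exact fun h ↦ hm (IncGraph.dist_inl_inr_eq_one_iff.1 h.symm)

lemma resolves_inr_inr_of_cornerLine {l m u : WLine p n} (hu : u ∈ cornerLines) {v : 𝕍}
    (hv : v ≠ 0) (hvu : v ∈ u.1) (hvl : v ∈ l.1) (hum : u.1 ⊓ m.1 = ⊥) :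
    (𝒢).Resolves resolvingSet (.inr l) (.inr m) := by
  refine ⟨.inr u, .inr ⟨u, hu, rfl⟩, ?_⟩
  have := IncGraph.dist_inr_inr_le_two (I := wIncid) (p := mk 𝕜 v hv)
    ((rep_mk_mem_iff hv).2 hvl) ((rep_mk_mem_iff hv).2 hvu)
  have := three_le_dist_inr_inr (by rwa [inf_comm] : m.1 ⊓ u.1 = ⊥)
  omega

lemma resolves_inl_inr (x : WPoint p n) (l : WLine p n) :
    (𝒢).Resolves resolvingSet (.inl x) (.inr l) :=
  ⟨_, .inl ⟨_, mk_mem_sidePoints (i := 0) (corner_ne_zero 0) (Submodule.subset_span (by simp)),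
    rfl⟩, IncGraph.dist_inl_ne_dist_inr preconnected x l _⟩

def sideMinor (a b : 𝕍) (i : Fin 4) : 𝕜 :=
  symp a (corner (i + 1)) * symp b (corner i) - symp a (corner i) * symp b (corner (i + 1))

lemma resolves_inl_inl_of_sideMinor_ne_zero {x y : WPoint p n} (i : Fin 4)
    (h : sideMinor x.rep y.rep i ≠ 0) : (𝒢).Resolves resolvingSet (.inl x) (.inl y) := by
  set z : 𝕍 := symp x.rep (corner (i + 1)) • corner i - symp x.rep (corner i) • corner (i + 1)
  have hyz : symp y.rep z ≠ 0 := by simpa [z, sideMinor] using h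
  have hz0 : z ≠ 0 := by rintro hz; simp [hz] at hyz
  have hz : z ∈ side i := Submodule.sub_mem _
    (Submodule.smul_mem _ _ (Submodule.subset_span (by simp)))
    (Submodule.smul_mem _ _ (Submodule.subset_span (by simp)))
  refine resolves_inl_inl_of_sidePoint (mk_mem_sidePoints hz0 hz) ?_ ?_
  · rw [symp_rep_mk_eq_zero_iff]
    simp only [z, symp_sub_right, symp_smul_right]
    ring
  · rwa [Ne, symp_rep_mk_eq_zero_iff]

lemma resolves_inl_inl_of_corner {x y : WPoint p n} (hxy : x ≠ y) (i : Fin 4)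
    (hx : symp x.rep (corner i) = 0) (hxi : x.rep (cornerIdx i) = 0)
    (hyi : y.rep (cornerIdx i) = 0) : (𝒢).Resolves resolvingSet (.inl x) (.inl y) := by
  have hind := linearIndependent_corner x.rep_nonzero hxi
  have hiso := symp_eq_zero_comm.1 hx
  refine resolves_inl_inl_of_cornerLine ⟨i, left_mem_lineOf hind hiso⟩
    (right_mem_lineOf hind hiso) fun hy ↦ ?_
  obtain ⟨α, β, hαβ⟩ := Submodule.mem_span_pair.1 hy
  have hα : α = 0 := by simpa [corner, hxi, hyi] using congrFun hαβ (cornerIdx i)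
  exact (LinearIndependent.pair_iff' x.rep_nonzero).1 (linearIndependent_pair_iff_ne.2 hxy) β
    (by simpa [hα] using hαβ)

lemma resolves_inl_inl {x y : WPoint p n} (hxy : x ≠ y) :
    (𝒢).Resolves resolvingSet (.inl x) (.inl y) := by
  by_cases h : ∃ i, sideMinor x.rep y.rep i ≠ 0
  · obtain ⟨i, hi⟩ := h
    exact resolves_inl_inl_of_sideMinor_ne_zero i hi
  push Not at h
  have h0 := h 0
  have h1 := h 1
  have h2 := h 2
  have h3 := h 3
  simp [sideMinor, symp, corner, cornerIdx] at h0 h1 h2 h3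
  rcases coords_eq_zero_of_cyclic_minors (linearIndependent_pair_iff_ne.2 hxy)
    (by linear_combination -h0) (by linear_combination -h1) (by linear_combination -h2)
    (by linear_combination -h3) with ⟨ha2, ha3, hb2, -⟩ | ⟨ha0, ha1, hb0, -⟩
  · exact resolves_inl_inl_of_corner hxy 1 (by simp [symp, corner, cornerIdx, ha3])
      (by simpa [cornerIdx]) (by simpa [cornerIdx])
  · exact resolves_inl_inl_of_corner hxy 0 (by simp [symp, corner, cornerIdx, ha1])
      (by simpa [cornerIdx]) (by simpa [cornerIdx])

lemma resolves_inr_inr_of_transversal {y₁ y₂ : WLine p n} (i : Fin 4) {z P : 𝕍}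
    (hz : z ∈ y₁.1) (hz0 : z ≠ 0) (hzc : symp z (corner i) = 0) (hz₂ : z ∉ y₂.1)
    (hP : P ∈ y₂.1) (hPz : symp P z = 0) (hPc : symp P (corner i) ≠ 0) :
    (𝒢).Resolves resolvingSet (.inr y₁) (.inr y₂) := by
  have hind : LinearIndependent 𝕜 ![corner i, z] := by
    refine (LinearIndependent.pair_iff' (corner_ne_zero i)).2 fun t ht ↦ hz0 ?_
    have : t * symp P (corner i) = 0 := by rw [← symp_smul_right, ht, hPz]
    simp [← ht, (mul_eq_zero.1 this).resolve_right hPc]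
  have hiso : symp (corner i) z = 0 := symp_eq_zero_comm.1 hzc
  refine resolves_inr_inr_of_cornerLine ⟨i, left_mem_lineOf hind hiso⟩ hz0
    (right_mem_lineOf hind hiso) hz ((Submodule.eq_bot_iff _).2 ?_)
  rintro v ⟨hv, hv₂⟩
  obtain ⟨α, β, rfl⟩ := Submodule.mem_span_pair.1 hv
  have hα : α = 0 := by
    have h := y₂.2.2 P hP _ hv₂
    simp only [symp_add_right, symp_smul_right, hPz, mul_zero, add_zero, mul_eq_zero] at h
    exact h.resolve_right hPc
  have hβ : β = 0 := by
    by_contra hβ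
    exact hz₂ ((Submodule.smul_mem_iff _ hβ).1 (by simpa [hα] using hv₂))
  simp [hα, hβ]

lemma resolves_inr_inr_of_concurrent {y₁ y₂ : WLine p n} (hne : y₁ ≠ y₂) {P : 𝕍} (hP0 : P ≠ 0)
    (hP₁ : P ∈ y₁.1) (hP₂ : P ∈ y₂.1) : (𝒢).Resolves resolvingSet (.inr y₁) (.inr y₂) := by
  obtain ⟨i, hi⟩ := exists_symp_corner_ne_zero hP0
  obtain ⟨z, hz, hz0, hzc⟩ := y₁.exists_mem_ne_zero_symp_eq_zero (corner i)
  refine resolves_inr_inr_of_transversal i hz hz0 hzc (fun hz₂ ↦ ?_) hP₂ (y₁.2.2 _ hP₁ _ hz) hi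
  by_cases hind : LinearIndependent 𝕜 ![P, z]
  · exact hne (Subtype.ext ((y₁.eq_span_pair hP₁ hz hind).trans
      (y₂.eq_span_pair hP₂ hz₂ hind).symm))
  · obtain ⟨t, rfl⟩ : ∃ t, t • P = z := by simpa [LinearIndependent.pair_iff' hP0] using hind
    rw [symp_smul_left, mul_eq_zero] at hzc
    simp [hzc.resolve_right hi] at hz0

/-- Its zero set is the hyperbolic quadric through the four sides. -/
def quad (v : 𝕍) : 𝕜 := v 0 * v 1 + v 2 * v 3

lemma quad_smul (c : 𝕜) (v : 𝕍) : quad (c • v) = c ^ 2 * quad v := by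
  simp only [quad, Pi.smul_apply, smul_eq_mul]; ring

lemma quad_corner (i : Fin 4) : quad (corner i : 𝕍) = 0 := by
  fin_cases i <;> simp [quad, corner, cornerIdx]

lemma eq_sum_corner (v : 𝕍) : v = ∑ i, v (cornerIdx i) • corner i := by
  ext k
  fin_cases k <;> simp [Fin.sum_univ_four, corner, cornerIdx]

lemma exists_sidePoint_of_quad_eq_zero (l : WLine p n) (h : ∀ w ∈ l.1, quad w = 0) :
    ∃ z ∈ sidePoints, wIncid z l := by
  obtain ⟨w, hw, hw0, hwc⟩ := l.exists_mem_ne_zero_symp_eq_zero (corner 1)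
  have h3 : w 3 = 0 := by simpa [symp, corner, cornerIdx] using hwc
  have hq : w 0 * w 1 = 0 := by simpa [quad, h3] using h w hw
  refine ⟨mk 𝕜 w hw0, ?_, (rep_mk_mem_iff hw0).2 hw⟩
  rcases mul_eq_zero.1 hq with h0 | h1
  · refine mk_mem_sidePoints (i := 1) hw0 (Submodule.mem_span_pair.2 ⟨w 2, w 1, ?_⟩)
    ext k
    fin_cases k <;> simp [corner, cornerIdx, h0, h3]
  · refine mk_mem_sidePoints (i := 0) hw0 (Submodule.mem_span_pair.2 ⟨w 0, w 2, ?_⟩)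
    ext k
    fin_cases k <;> simp [corner, cornerIdx, h1, h3]

section CharTwo

lemma quad_add (x y : Fin 4 → GaloisField 2 n) : quad (x + y) = quad x + quad y + symp x y := by
  simp only [quad, symp, Pi.add_apply, CharTwo.sub_eq_add]
  ring

lemma quad_sum_of_isotropic {ι : Type*} (s : Finset ι) (c : ι → GaloisField 2 n)
    (v : ι → Fin 4 → GaloisField 2 n) (h : ∀ i j, symp (v i) (v j) = 0) :
    quad (∑ i ∈ s, c i • v i) = ∑ i ∈ s, c i ^ 2 * quad (v i) := by
  classical
  induction s using Finset.induction_on with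
  | empty => simp [quad]
  | insert a s ha ih =>
    have hsymp : symp (c a • v a) (∑ i ∈ s, c i • v i) = 0 := by
      rw [← sympForm_apply, map_sum]
      simp [sympForm_apply, h]
    rw [Finset.sum_insert ha, Finset.sum_insert ha, quad_add, ih, quad_smul, hsymp, add_zero]

lemma quad_eq_zero_of_skew {y₁ y₂ : WLine 2 n} (hskew : y₁.1 ⊓ y₂.1 = ⊥)
    {P Q : Fin 4 → Fin 4 → GaloisField 2 n} (hP : ∀ i, P i ∈ y₁.1) (hQ : ∀ i, Q i ∈ y₂.1)
    (hPQ : ∀ i, P i + Q i = corner i) (hsymp : ∀ i, symp (P i) (Q i) = 0)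
    {w : Fin 4 → GaloisField 2 n} (hw : w ∈ y₁.1) : quad w = 0 := by
  set c := fun i ↦ w (cornerIdx i)
  have hsplit : ∑ i, c i • Q i = w - ∑ i, c i • P i := by
    conv_rhs => rw [eq_sum_corner w]
    simp [c, ← hPQ, smul_add, Finset.sum_add_distrib]
  have hQsum : ∑ i, c i • Q i = 0 := by
    have hmem : ∑ i, c i • Q i ∈ y₁.1 ⊓ y₂.1 :=
      ⟨hsplit ▸ y₁.1.sub_mem hw (y₁.1.sum_mem fun i _ ↦ y₁.1.smul_mem _ (hP i)),
        y₂.1.sum_mem fun i _ ↦ y₂.1.smul_mem _ (hQ i)⟩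
    rwa [hskew, Submodule.mem_bot] at hmem
  have hPsum : w = ∑ i, c i • P i := by rwa [hQsum, eq_comm, sub_eq_zero] at hsplit
  have hquad (i : Fin 4) : quad (P i) = quad (Q i) := by
    have h := quad_corner (p := 2) (n := n) i
    rwa [← hPQ i, quad_add, hsymp, add_zero, CharTwo.add_eq_zero] at h
  calc quad w = ∑ i, c i ^ 2 * quad (P i) := by
        rw [hPsum, quad_sum_of_isotropic _ _ _ fun i j ↦ y₁.2.2 _ (hP i) _ (hP j)]
    _ = ∑ i, c i ^ 2 * quad (Q i) := by simp_rw [hquad]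
    _ = 0 := by
        rw [← quad_sum_of_isotropic _ _ _ fun i j ↦ y₂.2.2 _ (hQ i) _ (hQ j), hQsum]
        simp [quad]

lemma resolves_inr_inr_of_skew {y₁ y₂ : WLine 2 n} (hskew : y₁.1 ⊓ y₂.1 = ⊥) :
    (IncGraph (wIncid (p := 2) (n := n))).Resolves resolvingSet (.inr y₁) (.inr y₂) := by
  have hmiss {v : Fin 4 → GaloisField 2 n} (h₁ : v ∈ y₁.1) (h₂ : v ∈ y₂.1) : v = 0 := by
    simpa [hskew] using Submodule.mem_inf.2 ⟨h₁, h₂⟩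
  have hsup : y₁.1 ⊔ y₂.1 = ⊤ := by
    apply Submodule.eq_top_of_finrank_eq
    have h := Submodule.finrank_sup_add_finrank_inf_eq y₁.1 y₂.1
    rw [hskew, finrank_bot, y₁.2.1, y₂.2.1] at h
    rw [Module.finrank_fin_fun]
    omega
  choose P hP Q hQ hPQ using fun i ↦ Submodule.mem_sup.1 (hsup ▸ Submodule.mem_top :
    corner i ∈ y₁.1 ⊔ y₂.1)
  by_cases h : ∃ i, symp (P i) (Q i) ≠ 0
  · obtain ⟨i, hi⟩ := h
    obtain ⟨z, hz, hz0, hzc⟩ := y₁.exists_mem_ne_zero_symp_eq_zero (corner i)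
    refine resolves_inr_inr_of_transversal i hz hz0 hzc (fun hz₂ ↦ hz0 (hmiss hz hz₂)) (hQ i)
      ?_ ?_
    · rw [eq_sub_of_add_eq' (hPQ i), symp_sub_left, symp_eq_zero_comm.1 hzc,
        y₁.2.2 _ (hP i) _ hz, sub_zero]
    · rwa [← hPQ i, symp_add_right, symp_self, add_zero, symp_swap, neg_ne_zero]
  · push Not at h
    obtain ⟨z, hzT, hz⟩ := exists_sidePoint_of_quad_eq_zero y₁
      fun w hw ↦ quad_eq_zero_of_skew hskew hP hQ hPQ h hw
    exact resolves_inr_inr_of_sidePoint hzT hz fun hz₂ ↦ z.rep_nonzero (hmiss hz hz₂)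

lemma resolves_inr_inr {y₁ y₂ : WLine 2 n} (hne : y₁ ≠ y₂) :
    (IncGraph (wIncid (p := 2) (n := n))).Resolves resolvingSet (.inr y₁) (.inr y₂) := by
  by_cases hskew : y₁.1 ⊓ y₂.1 = ⊥
  · exact resolves_inr_inr_of_skew hskew
  · obtain ⟨P, ⟨hP₁, hP₂⟩, hP0⟩ := Submodule.exists_mem_ne_zero_of_ne_bot hskew
    exact resolves_inr_inr_of_concurrent hne hP0 hP₁ hP₂

theorem isResolvingSet_resolvingSet :
    IsResolvingSet (IncGraph (wIncid (p := 2) (n := n))) resolvingSet :=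
  SimpleGraph.isResolvingSet_of_resolves fun
    | .inl _, .inl _, h => resolves_inl_inl (h <| congrArg _ ·)
    | .inl x, .inr l, _ => resolves_inl_inr x l
    | .inr l, .inl x, _ => (resolves_inl_inr x l).symm
    | .inr _, .inr _, h => resolves_inr_inr (h <| congrArg _ ·)

end CharTwo

end WQ

/-- If `q = p^n` is even then the metric dimension of the generalized quadrangle `W(q)`
is at most `8q`: there is a resolving set of its incidence graph of size at most `8q`. -/
theorem wq_metric_dimension_upper (p n : ℕ) [Fact p.Prime] (hn : 0 < n)
    (heven : Even (p ^ n)) :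
    ∃ S : Set (WPoint p n ⊕ WLine p n),
      IsResolvingSet (IncGraph (wIncid (p := p) (n := n))) S ∧ S.ncard ≤ 8 * p ^ n := by
  obtain rfl : p = 2 := (Fact.out : p.Prime).even_iff.1 (Nat.even_pow.1 heven).1
  exact ⟨WQ.resolvingSet, WQ.isResolvingSet_resolvingSet, WQ.ncard_resolvingSet_le hn.ne'⟩

end
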